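/- arXiv:1906.01476 — 3 statements merged into one kernel-verified Lean document; each statement's English description precedes it below -/
import Mathlib

section
/- Consider i.i.d. sampling from a probability space (U, P). Let X be a set, f : X × U → ℝ measurable in u for each x, and L* = inf_{x∈X} sup_{u∈U} f(x,u) finite. Define the tail probability t(x,ε) = P({u : f(x,u) > L* − ε}) and h(ε) = inf_{x∈X} t(x,ε). If there exists ε > 0 with h(ε) = 0, then the scenario approach is inconsistent: P^∞-almost surely it is NOT the case that lim_{N→∞} inf_{x∈X} max_{1≤i≤N} f(x,u_i) = L*. In fact, P^∞-almost surely, lim_{N→∞} inf_{x∈X} max_{1≤i≤N} f(x,u_i) ≤ L* − ε. -/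
open MeasureTheory Filter Topology Set
open scoped ENNReal

/-!
For a fixed `x`, the scenario value with `n` samples can exceed `c` only if some sample falls in
the tail `{u | c < f x u}`, so by the union bound its probability is at most `n • P {u | c < f x u}`.
Since `x` is arbitrary this is bounded by `n` times the infimum of the tails, which is `0`; a
countable intersection over `N` then keeps every scenario value below `L* - ε` almost surely.
-/

lemma map_eval_eq_of_map_restrict_eq_pi {U : Type*} [MeasurableSpace U] {P : Measure U}
    [IsProbabilityMeasure P] {Q : Measure (ℕ → U)} {N : ℕ}
    (h : Q.map (fun ω (i : Fin N) => ω (i : ℕ)) = Measure.pi fun _ : Fin N => P) (i : Fin N) :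
    Q.map (fun ω => ω (i : ℕ)) = P := by
  rw [← (measurePreserving_eval (fun _ : Fin N => P) i).map_eq, ← h,
    Measure.map_map (measurable_pi_apply i) (by fun_prop)]
  rfl

lemma forall_exists_lt_of_lt_ciInf_ciSup {X ι : Type*} [Nonempty ι] {g : X → ι → ℝ} {c : ℝ}
    (hg : BddBelow (range fun x => ⨆ i, g x i)) (h : c < ⨅ x, ⨆ i, g x i) (x : X) :
    ∃ i, c < g x i :=
  exists_lt_of_lt_ciSup (h.trans_le (ciInf_le hg x))

section Sampling

variable {X U Ω ι : Type*} [MeasurableSpace U] [MeasurableSpace Ω] [Fintype ι] [Nonempty ι]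
  {P : Measure U} {Q : Measure Ω} {ξ : ι → Ω → U} {f : X → U → ℝ} {C : ℝ}

lemma measure_lt_iInf_iSup_le (hξ : ∀ i, Measurable (ξ i)) (hlaw : ∀ i, Q.map (ξ i) = P)
    (hf : ∀ x, Measurable (f x)) (hC : ∀ x u, C ≤ f x u) (c : ℝ) :
    Q {ω | c < ⨅ x, ⨆ i, f x (ξ i ω)} ≤ Fintype.card ι * ⨅ x, P {u | c < f x u} := by
  rw [ENNReal.mul_iInf_of_ne (by simp) (ENNReal.natCast_ne_top _)]
  refine le_iInf fun x => ?_
  -- without the lower bound `C`, `⨅ x` could take its junk value `0`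
  have hbdd : ∀ ω, BddBelow (range fun x => ⨆ i, f x (ξ i ω)) := fun ω =>
    ⟨C, forall_mem_range.2 fun y => (hC y _).trans
      (le_ciSup (f := fun i => f y (ξ i ω)) (Finite.bddAbove_range _) (Classical.arbitrary ι))⟩
  have hsub : {ω | c < ⨅ x, ⨆ i, f x (ξ i ω)} ⊆ ⋃ i, ξ i ⁻¹' {u | c < f x u} := fun ω hω =>
    mem_iUnion.2 (forall_exists_lt_of_lt_ciInf_ciSup (hbdd ω) hω x)
  calc Q {ω | c < ⨅ x, ⨆ i, f x (ξ i ω)}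
      ≤ ∑ i, Q (ξ i ⁻¹' {u | c < f x u}) :=
        (measure_mono hsub).trans (measure_iUnion_fintype_le _ _)
    _ = ∑ _i : ι, P {u | c < f x u} := by
        refine Finset.sum_congr rfl fun i _ => ?_
        rw [← hlaw i, Measure.map_apply (hξ i) (measurableSet_lt measurable_const (hf x))]
    _ = Fintype.card ι * P {u | c < f x u} := by simp

lemma ae_iInf_iSup_le_of_iInf_tail_eq_zero (hξ : ∀ i, Measurable (ξ i))
    (hlaw : ∀ i, Q.map (ξ i) = P) (hf : ∀ x, Measurable (f x)) (hC : ∀ x u, C ≤ f x u) {c : ℝ}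
    (htail : ⨅ x, P {u | c < f x u} = 0) :
    ∀ᵐ ω ∂Q, ⨅ x, ⨆ i, f x (ξ i ω) ≤ c := by
  simp_rw [ae_iff, not_le]
  exact le_antisymm ((measure_lt_iInf_iSup_le hξ hlaw hf hC c).trans (by simp [htail])) zero_le

end Sampling

theorem scenario_inconsistent_of_vanishing_tail_general
    {X U : Type*} [MeasurableSpace U]
    (P : Measure U) [IsProbabilityMeasure P]
    (Q : Measure (ℕ → U))
    (hproj : ∀ N : ℕ,
      Q.map (fun ω (i : Fin N) => ω (i : ℕ)) = Measure.pi fun _ : Fin N => P)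
    (f : X → U → ℝ) (hmeas : ∀ x, Measurable (f x))
    (hbdd : ∃ C, ∀ x u, |f x u| ≤ C)
    (Lstar : ℝ)
    (LN : ℕ → (ℕ → U) → ℝ)
    (hLN : ∀ N ω, LN N ω = ⨅ x, ⨆ i : Fin (N + 1), f x (ω (i : ℕ)))
    (ε : ℝ) (hε : 0 < ε)
    (h0 : ⨅ x, P {u | Lstar - ε < f x u} = 0) :
    (∀ᵐ ω ∂Q, (⨆ N, LN N ω) ≤ Lstar - ε) ∧
      Q {ω | Tendsto (fun N => LN N ω) atTop (𝓝 Lstar)} = 0 := by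
  obtain ⟨C, hC⟩ := hbdd
  have hbelow : ∀ N, ∀ᵐ ω ∂Q, LN N ω ≤ Lstar - ε := fun N => by
    simpa only [hLN] using ae_iInf_iSup_le_of_iInf_tail_eq_zero
      (ξ := fun (i : Fin (N + 1)) (ω : ℕ → U) => ω i) (fun i => measurable_pi_apply _)
      (map_eval_eq_of_map_restrict_eq_pi (hproj (N + 1))) hmeas
      (fun x u => neg_le_of_abs_le (hC x u)) h0
  have hall : ∀ᵐ ω ∂Q, ∀ N, LN N ω ≤ Lstar - ε := ae_all_iff.2 hbelow
  refine ⟨hall.mono fun ω hω => ciSup_le hω, measure_mono_null ?_ (ae_iff.1 hall)⟩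
  intro ω hlim hle
  linarith [le_of_tendsto' hlim hle]

/-- Obstruction to consistency: if the infimum over `x` of the tail probability
`P {u : f(x,u) > L* - ε}` vanishes for some `ε > 0`, then almost surely (w.r.t. the
i.i.d. product law `Q`) the limit of the scenario values stays at least `ε` below `L*`,
so the scenario approach is almost surely inconsistent. -/
theorem scenario_inconsistent_of_vanishing_tail
    {X U : Type*} [Nonempty X] [Nonempty U] [MeasurableSpace U]
    (P : Measure U) [IsProbabilityMeasure P]
    (Q : Measure (ℕ → U)) [IsProbabilityMeasure Q]
    (hproj : ∀ N : ℕ,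
      Q.map (fun ω (i : Fin N) => ω (i : ℕ)) = Measure.pi fun _ : Fin N => P)
    (f : X → U → ℝ) (hmeas : ∀ x, Measurable (f x))
    (hbdd : ∃ C, ∀ x u, |f x u| ≤ C)
    (Lstar : ℝ) (hL : Lstar = ⨅ x, ⨆ u, f x u)
    (LN : ℕ → (ℕ → U) → ℝ)
    (hLN : ∀ N ω, LN N ω = ⨅ x, ⨆ i : Fin (N + 1), f x (ω (i : ℕ)))
    (ε : ℝ) (hε : 0 < ε)
    (h0 : ⨅ x, P {u | Lstar - ε < f x u} = 0)
    (hBmeas : ∀ N, MeasurableSet {ω : ℕ → U | LN N ω ≤ Lstar - ε}) :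
    (∀ᵐ ω ∂Q, (⨆ N, LN N ω) ≤ Lstar - ε) ∧
      Q {ω | Tendsto (fun N => LN N ω) atTop (𝓝 Lstar)} = 0 :=
  scenario_inconsistent_of_vanishing_tail_general P Q hproj f hmeas hbdd Lstar LN hLN ε hε h0
end

section
/- Let X ⊆ ℝ^n be compact, (U,d) a metric space, P a fully supported Borel probability measure on U, and f : X × U → ℝ lower semicontinuous. Then for each ε > 0 the function x ↦ t(x,ε) = P({u : f(x,u) > L* − ε}) is a strictly positive lower semicontinuous function on X, and consequently h(ε) = inf_{x∈X} t(x,ε) = min_{x∈X} t(x,ε) > 0. -/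
open MeasureTheory Filter Topology

/-!
If `x_k → x` and `u` lies in the open section `{u | c < f x u}`, lower semicontinuity of `f`
puts `u` in all but finitely many of the sections at `x_k`; continuity of the measure from below
then gives `μ(section at x) ≤ liminf μ(section at x_k)`, i.e. lower semicontinuity of the tail
probability. Each section at a point of `X` is a nonempty open set, since `L* - ε` lies below the
supremum `sup_u f(x,u) ≥ L*`, so full support makes it positive, and a lower semicontinuous
function attains its minimum on the compact set `X`.
-/

theorem lowerSemicontinuous_measure_of_isOpen_setOf_mem {α β : Type*} [TopologicalSpace α]
    [FirstCountableTopology α] [MeasurableSpace β] (μ : Measure β) {s : α → Set β}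
    (hs : ∀ u, IsOpen {x | u ∈ s x}) :
    LowerSemicontinuous fun x => μ (s x) := by
  intro x y hy
  by_contra h
  rw [not_eventually] at h
  obtain ⟨z, hzx, hzy⟩ := exists_seq_forall_of_frequently h
  set t : ℕ → Set β := fun N => ⋂ k ∈ Set.Ici N, s (z k)
  have ht_mono : Monotone t := fun N M hNM =>
    Set.biInter_subset_biInter_left (Set.Ici_subset_Ici.2 hNM)
  have hsub : s x ⊆ ⋃ N, t N := by
    intro u hu
    obtain ⟨N, hN⟩ := eventually_atTop.1 (hzx.eventually ((hs u).mem_nhds hu))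
    exact Set.mem_iUnion.2 ⟨N, Set.mem_iInter₂.2 hN⟩
  have hle : μ (s x) ≤ y :=
    calc μ (s x) ≤ μ (⋃ N, t N) := measure_mono hsub
      _ = ⨆ N, μ (t N) := ht_mono.measure_iUnion
      _ ≤ y := iSup_le fun N =>
        (measure_mono (Set.biInter_subset_of_mem Set.self_mem_Ici)).trans (not_lt.1 (hzy N))
  exact (hle.trans_lt hy).false

theorem tail_probability_positive_lsc_min_general
    {n : ℕ} {U : Type*} [MetricSpace U] [MeasurableSpace U] [Nonempty U]
    (P : Measure U)
    (hfull : ∀ V : Set U, IsOpen V → V.Nonempty → 0 < P V)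
    (X : Set (Fin n → ℝ)) (hX : IsCompact X) (hXne : X.Nonempty)
    (f : (Fin n → ℝ) → U → ℝ)
    (hf : LowerSemicontinuous (fun p : (Fin n → ℝ) × U => f p.1 p.2))
    (hbb : BddBelow (Set.range fun x : X => ⨆ u, f x.1 u))
    (Lstar : ℝ) (hL : Lstar = ⨅ x : X, ⨆ u, f x.1 u)
    (ε : ℝ) (hε : 0 < ε) :
    LowerSemicontinuousOn (fun x => P {u | Lstar - ε < f x u}) X ∧
      (∀ x ∈ X, 0 < P {u | Lstar - ε < f x u}) ∧
      ∃ x₀ ∈ X, (∀ x ∈ X, P {u | Lstar - ε < f x₀ u} ≤ P {u | Lstar - ε < f x u}) ∧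
        0 < P {u | Lstar - ε < f x₀ u} := by
  have hopen_x : ∀ u, IsOpen {x | Lstar - ε < f x u} := fun u =>
    (LowerSemicontinuous.comp hf (continuous_id.prodMk continuous_const)).isOpen_preimage _
  have hopen_u : ∀ x, IsOpen {u | Lstar - ε < f x u} := fun x =>
    (LowerSemicontinuous.comp hf (Continuous.prodMk_right x)).isOpen_preimage _
  have hlsc : LowerSemicontinuousOn (fun x => P {u | Lstar - ε < f x u}) X :=
    (lowerSemicontinuous_measure_of_isOpen_setOf_mem P hopen_x).lowerSemicontinuousOn X
  have hpos : ∀ x ∈ X, 0 < P {u | Lstar - ε < f x u} := by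
    intro x hx
    have hsup : Lstar - ε < ⨆ u, f x u :=
      (sub_lt_self Lstar hε).trans_le (hL ▸ ciInf_le hbb ⟨x, hx⟩)
    exact hfull _ (hopen_u x) (exists_lt_of_lt_ciSup hsup)
  obtain ⟨x₀, hx₀, hmin⟩ := hlsc.exists_isMinOn hXne hX
  exact ⟨hlsc, hpos, x₀, hx₀, fun x hx => hmin hx, hpos x₀ hx₀⟩

/-- Proposition 3: on a compact decision set `X ⊆ ℝⁿ`, with a fully supported Borel
probability measure on the uncertainty set and jointly lower semicontinuous cost,
the tail probability `x ↦ P {u : f(x,u) > L* - ε}` is strictly positive and lower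
semicontinuous on `X`, hence attains a strictly positive minimum. -/
theorem tail_probability_positive_lsc_min
    {n : ℕ} {U : Type*} [MetricSpace U] [MeasurableSpace U] [BorelSpace U] [Nonempty U]
    (P : Measure U) [IsProbabilityMeasure P]
    (hfull : ∀ V : Set U, IsOpen V → V.Nonempty → 0 < P V)
    (X : Set (Fin n → ℝ)) (hX : IsCompact X) (hXne : X.Nonempty)
    (f : (Fin n → ℝ) → U → ℝ)
    (hf : LowerSemicontinuous (fun p : (Fin n → ℝ) × U => f p.1 p.2))
    (hb : ∀ x ∈ X, BddAbove (Set.range (f x)))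
    (hbb : BddBelow (Set.range fun x : X => ⨆ u, f x.1 u))
    (Lstar : ℝ) (hL : Lstar = ⨅ x : X, ⨆ u, f x.1 u)
    (ε : ℝ) (hε : 0 < ε) :
    LowerSemicontinuousOn (fun x => P {u | Lstar - ε < f x u}) X ∧
      (∀ x ∈ X, 0 < P {u | Lstar - ε < f x u}) ∧
      ∃ x₀ ∈ X, (∀ x ∈ X, P {u | Lstar - ε < f x₀ u} ≤ P {u | Lstar - ε < f x u}) ∧
        0 < P {u | Lstar - ε < f x₀ u} :=
  tail_probability_positive_lsc_min_general P hfull X hX hXne f hf hbb Lstar hL ε hε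
end

section
/- Scenario bound via covering numbers: Let U be a compact metric space with fully supported Borel probability measure P, X a set, f : X × U → ℝ with each f(x,·) continuous, such that the family K_f = { f(x,·) : x ∈ X } is precompact in C(U) with the supremum norm. Let L* = inf_x sup_u f(x,u), t(x,ε) = P({u : f(x,u) > L* − ε}), h(ε) = inf_x t(x,ε). Then for every ε > 0 and N ∈ ℕ, P^N(B_N(ε)) ≤ N(K_f, ε/4) · exp(−N · h(ε/4)), where B_N(ε) = { (u_i)_{i=1}^N : inf_x max_i f(x,u_i) ≤ L* − ε } and N(K_f, δ) is the covering number of K_f in supremum norm. -/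
open MeasureTheory ENNReal

/-!
If `inf_x max_i f x (ω i) ≤ L* - ε`, pick `x` with `max_i f x (ω i) < L* - 3ε/4` and an element
`g = f x'` of a minimal internal `ε/4`-net of `K_f` close to `f x`: then every sample satisfies
`g (ω i) < L* - ε/2`. A single sample avoids `{g < L* - ε/2}` with probability at least
`P {f x' > L* - ε/4} ≥ h`, so by independence all `N` samples land in it with probability at most
`(1 - h)^N ≤ exp (-N h)`, and a union bound over the net gives the factor `N(K_f, ε/4)`.
-/

/-- The internal covering number: least cardinality of a finite subset `s ⊆ K` such
that every point of `K` lies within distance `ε` of `s` (`⊤` if none exists). -/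
noncomputable def coveringNum {M : Type*} [MetricSpace M] (K : Set M) (ε : ℝ) : ℕ∞ :=
  ⨅ (s : Finset M) (_ : ↑s ⊆ K) (_ : ∀ a ∈ K, ∃ b ∈ s, dist a b ≤ ε), (s.card : ℕ∞)

section CoveringNumber

variable {M : Type*} [MetricSpace M] {K : Set M} {ε : ℝ}

theorem exists_finset_card_eq_coveringNum (h : coveringNum K ε ≠ ⊤) :
    ∃ s : Finset M, ↑s ⊆ K ∧ (∀ a ∈ K, ∃ b ∈ s, dist a b ≤ ε) ∧
      (s.card : ℕ∞) = coveringNum K ε := by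
  simp only [coveringNum, ne_eq, iInf_eq_top, not_forall] at h
  obtain ⟨s₀, hs₀K, hs₀net, -⟩ := h
  have : Nonempty {s : Finset M // ↑s ⊆ K ∧ ∀ a ∈ K, ∃ b ∈ s, dist a b ≤ ε} :=
    ⟨s₀, hs₀K, hs₀net⟩
  obtain ⟨s, hs⟩ := ENat.exists_eq_iInf fun s : {s : Finset M // ↑s ⊆ K ∧
    ∀ a ∈ K, ∃ b ∈ s, dist a b ≤ ε} ↦ ((s : Finset M).card : ℕ∞)
  refine ⟨s, s.2.1, s.2.2, ?_⟩
  rw [hs, coveringNum]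
  simp_rw [iInf_subtype, iInf_and]

theorem le_coveringNum_mul {a c : ℝ≥0∞} (hc : c ≠ 0)
    (h : ∀ s : Finset M, ↑s ⊆ K → (∀ x ∈ K, ∃ y ∈ s, dist x y ≤ ε) → a ≤ s.card * c) :
    a ≤ coveringNum K ε * c := by
  by_cases htop : coveringNum K ε = ⊤
  · simp [htop, ENNReal.top_mul hc]
  obtain ⟨s, hsK, hsnet, hcard⟩ := exists_finset_card_eq_coveringNum htop
  simpa [← hcard] using h s hsK hsnet

end CoveringNumber

theorem measure_le_exp_neg_of_le_measure_compl {Ω : Type*} [MeasurableSpace Ω] {P : Measure Ω}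
    [IsProbabilityMeasure P] {C : Set Ω} (hC : MeasurableSet C) {p : ℝ}
    (hp : p ≤ (P Cᶜ).toReal) : P C ≤ ENNReal.ofReal (Real.exp (-p)) := by
  have hsum : (P C).toReal + (P Cᶜ).toReal = 1 := by
    rw [← ENNReal.toReal_add (measure_ne_top P _) (measure_ne_top P _),
      measure_add_measure_compl hC, measure_univ, ENNReal.toReal_one]
  rw [← ENNReal.ofReal_toReal (measure_ne_top P C)]
  exact ENNReal.ofReal_le_ofReal (by linarith [Real.add_one_le_exp (-p)])

theorem measure_pi_univ_pi_le_exp_neg {ι Ω : Type*} [Fintype ι] [MeasurableSpace Ω]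
    {P : Measure Ω} [IsProbabilityMeasure P] {C : Set Ω} (hC : MeasurableSet C) {p : ℝ}
    (hp : p ≤ (P Cᶜ).toReal) :
    Measure.pi (fun _ : ι ↦ P) (Set.univ.pi fun _ ↦ C) ≤
      ENNReal.ofReal (Real.exp (-(Fintype.card ι : ℝ) * p)) := by
  calc Measure.pi (fun _ : ι ↦ P) (Set.univ.pi fun _ ↦ C) = P C ^ Fintype.card ι := by
        rw [Measure.pi_pi, Finset.prod_const, Finset.card_univ]
    _ ≤ ENNReal.ofReal (Real.exp (-p)) ^ Fintype.card ι :=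
        pow_le_pow_left₀ zero_le (measure_le_exp_neg_of_le_measure_compl hC hp) _
    _ = ENNReal.ofReal (Real.exp (-(Fintype.card ι : ℝ) * p)) := by
        rw [← ENNReal.ofReal_pow (Real.exp_nonneg _), ← Real.exp_nat_mul]
        ring_nf

theorem setOf_iInf_iSup_le_subset_biUnion {X U ι : Type*} [Nonempty X] [Finite ι]
    [TopologicalSpace U] [CompactSpace U] {f : X → C(U, ℝ)} {s : Finset C(U, ℝ)} {c δ : ℝ}
    (hδ : 0 < δ) (hnet : ∀ x, ∃ g ∈ s, dist (f x) g ≤ δ) :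
    {ω : ι → U | ⨅ x, ⨆ i, f x (ω i) ≤ c} ⊆
      ⋃ g ∈ s, Set.univ.pi fun _ ↦ {u | g u < c + 2 * δ} := by
  intro ω hω
  obtain ⟨x, hx⟩ := exists_lt_of_ciInf_lt (hω.trans_lt (lt_add_of_pos_right c hδ))
  obtain ⟨g, hgs, hg⟩ := hnet x
  refine Set.mem_biUnion hgs fun i _ ↦ ?_
  have hfx : f x (ω i) < c + δ :=
    (le_ciSup (Set.finite_range fun j ↦ f x (ω j)).bddAbove i).trans_lt hx
  have hgf : g (ω i) - f x (ω i) ≤ δ :=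
    (le_abs_self _).trans <| (ContinuousMap.dist_apply_le_dist _).trans (dist_comm (f x) g ▸ hg)
  show g (ω i) < c + 2 * δ
  linarith

theorem scenario_bad_set_bound_general
    {X U : Type*} [Nonempty X] [MetricSpace U] [CompactSpace U]
    [MeasurableSpace U] [BorelSpace U]
    (P : Measure U) [IsProbabilityMeasure P]
    (f : X → C(U, ℝ))
    (Lstar : ℝ)
    (ε : ℝ) (hε : 0 < ε)
    (h : ℝ) (hh : h = ⨅ x, (P {u | Lstar - ε / 4 < f x u}).toReal)
    (N : ℕ) :
    (Measure.pi fun _ : Fin N => P)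
        {ω : Fin N → U | (⨅ x, ⨆ i : Fin N, f x (ω i)) ≤ Lstar - ε} ≤
      ENat.toENNReal (coveringNum (Set.range f) (ε / 4)) *
        ENNReal.ofReal (Real.exp (-(N : ℝ) * h)) := by
  refine le_coveringNum_mul (by positivity) fun s hsf hnet ↦ ?_
  have hbad := setOf_iInf_iSup_le_subset_biUnion (ι := Fin N) (c := Lstar - ε) (by positivity)
    fun x ↦ hnet (f x) ⟨x, rfl⟩
  rw [show Lstar - ε + 2 * (ε / 4) = Lstar - ε / 2 by ring] at hbad
  have hsingle (g : C(U, ℝ)) (hg : g ∈ s) :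
      Measure.pi (fun _ : Fin N ↦ P) (Set.univ.pi fun _ ↦ {u | g u < Lstar - ε / 2}) ≤
        ENNReal.ofReal (Real.exp (-(N : ℝ) * h)) := by
    obtain ⟨x, rfl⟩ := hsf hg
    have hgood : {u | Lstar - ε / 4 < f x u} ⊆ {u | f x u < Lstar - ε / 2}ᶜ :=
      fun u (hu : Lstar - ε / 4 < f x u) ↦ (not_lt.2 (by linarith) : ¬ f x u < Lstar - ε / 2)
    have hhx : h ≤ (P {u | f x u < Lstar - ε / 2}ᶜ).toReal := hh ▸
      (ciInf_le ⟨0, Set.forall_mem_range.2 fun _ ↦ ENNReal.toReal_nonneg⟩ x).trans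
        (ENNReal.toReal_mono (measure_ne_top P _) (measure_mono hgood))
    have := measure_pi_univ_pi_le_exp_neg (ι := Fin N)
      (isOpen_lt (f x).continuous continuous_const).measurableSet hhx
    rwa [Fintype.card_fin] at this
  calc _ ≤ _ := measure_mono hbad
    _ ≤ ∑ g ∈ s, _ := measure_biUnion_finset_le _ _
    _ ≤ s.card • _ := Finset.sum_le_card_nsmul _ _ _ hsingle
    _ = _ := nsmul_eq_mul _ _

/-- Theorem 5 (main finite-sample bound): if the family `K_f = {f(x,·) : x ∈ X}` of
continuous costs on a compact uncertainty set is precompact in `C(U)` (sup norm) and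
`P` is fully supported, then the probability of the bad set `B_N(ε)` is at most
`N(K_f, ε/4) · exp(−N · h(ε/4))`, where `h(δ) = inf_x P {u : f(x,u) > L* − δ}`. -/
theorem scenario_bad_set_bound
    {X U : Type*} [Nonempty X] [MetricSpace U] [CompactSpace U] [Nonempty U]
    [MeasurableSpace U] [BorelSpace U]
    (P : Measure U) [IsProbabilityMeasure P]
    (hfull : ∀ V : Set U, IsOpen V → V.Nonempty → 0 < P V)
    (f : X → C(U, ℝ))
    (hprecompact : IsCompact (closure (Set.range f)))
    (Lstar : ℝ) (hL : Lstar = ⨅ x, ⨆ u, f x u)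
    (ε : ℝ) (hε : 0 < ε)
    (h : ℝ) (hh : h = ⨅ x, (P {u | Lstar - ε / 4 < f x u}).toReal)
    (N : ℕ) :
    (Measure.pi fun _ : Fin N => P)
        {ω : Fin N → U | (⨅ x, ⨆ i : Fin N, f x (ω i)) ≤ Lstar - ε} ≤
      ENat.toENNReal (coveringNum (Set.range f) (ε / 4)) *
        ENNReal.ofReal (Real.exp (-(N : ℝ) * h)) :=
  scenario_bad_set_bound_general P f Lstar ε hε h hh N
end
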